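/- Theorem 3.1, unique solvability part: Let Δt > 0, M > 0, β > 0, α ≥ 0. Let Z^{n-1}, Z^n be grid functions such that Z^n and Δ_h Z^n satisfy the discrete Neumann BC, let W^n be a grid function satisfying the discrete Neumann BC, let Ψ^n be a grid function, R^n a real number, and assume E_1^h(Z̃^{n+1/2}) > 0 where Z̃^{n+1/2} = (3Z^n - Z^{n-1})/2. Then there exists a unique tuple (Z^{n+1}, W^{n+1}, R^{n+1}, Ψ^{n+1}), where Z^{n+1} and W^{n+1} are grid functions such that Z^{n+1}, Δ_h Z^{n+1} and W^{n+1} satisfy the discrete Neumann BC, Ψ^{n+1} is determined at interior cells, and R^{n+1} ∈ ℝ, satisfying at all interior cells: (i) Ψ^{n+1} - Ψ^n + βΔt Ψ^{n+1/2} = MΔt Δ_h W^{n+1/2}; (ii) Δt Ψ^{n+1/2} = Z^{n+1} - Z^n; (iii) W^{n+1/2} = Δ_h^2 Z^{n+1/2} + 2Δ_h Z̃^{n+1/2} + α Z^{n+1/2} + (R^{n+1/2}/√(E_1^h(Z̃^{n+1/2}))) F'(Z̃^{n+1/2}); (iv) R^{n+1} - R^n = (1/(2√(E_1^h(Z̃^{n+1/2}))))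 (F'(Z̃^{n+1/2}), Z^{n+1} - Z^n)_m; where f^{n+1/2} = (f^{n+1} + f^n)/2 for f = Z, W, Ψ, R. -/

import Mathlib

/-!
Eliminating `Ψ^{n+1}` by (ii), `R^{n+1}` by (iv) and `W^{n+1}` by (iii) reduces the step to a
single linear equation `z - κ Δ_h μ(z) = b` for `Z^{n+1}`, where
`μ(z) = Δ_h² z + α z + c (f, z)_m f` with `κ, c ≥ 0`. Summation by parts makes `Δ_h` symmetric and
nonpositive under the Neumann BC, and this forces every solution of the homogeneous equation to
vanish. The equation only involves the finitely many interior values, and an injective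
endomorphism of a finite-dimensional space is onto: this gives existence, and the difference of two solutions solves the homogeneous equation, which gives
uniqueness.
-/

open Finset

/-- Discrete inner product `(f,g)_m` over interior cells `i = 1,...,Nx`, `j = 1,...,Ny`. -/
noncomputable def innerM (Nx Ny : ℕ) (hx hy : ℝ) (f g : ℕ → ℕ → ℝ) : ℝ :=
  ∑ i ∈ Finset.Icc 1 Nx, ∑ j ∈ Finset.Icc 1 Ny, hx * hy * f i j * g i j

/-- Discrete inner product `(u,v)_x` for x-edge arrays; index `i` stands for `i + 1/2`. -/
noncomputable def innerX (Nx Ny : ℕ) (hx hy : ℝ) (u v : ℕ → ℕ → ℝ) : ℝ :=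
  ∑ i ∈ Finset.Icc 1 (Nx - 1), ∑ j ∈ Finset.Icc 1 Ny, hx * hy * u i j * v i j

/-- Discrete inner product `(u,v)_y` for y-edge arrays; index `j` stands for `j + 1/2`. -/
noncomputable def innerY (Nx Ny : ℕ) (hx hy : ℝ) (u v : ℕ → ℕ → ℝ) : ℝ :=
  ∑ i ∈ Finset.Icc 1 Nx, ∑ j ∈ Finset.Icc 1 (Ny - 1), hx * hy * u i j * v i j

/-- `[d_x g]_{i+1/2, j}`, stored at index `(i, j)`. -/
noncomputable def dX (hx : ℝ) (g : ℕ → ℕ → ℝ) : ℕ → ℕ → ℝ := fun i j => (g (i + 1) j - g i j) / hx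

/-- `[d_y g]_{i, j+1/2}`, stored at index `(i, j)`. -/
noncomputable def dY (hy : ℝ) (g : ℕ → ℕ → ℝ) : ℕ → ℕ → ℝ := fun i j => (g i (j + 1) - g i j) / hy

/-- `[D_x w]_{i,j} = (w_{i+1/2,j} - w_{i-1/2,j})/h_x` for an x-edge array `w`. -/
noncomputable def DX (hx : ℝ) (w : ℕ → ℕ → ℝ) : ℕ → ℕ → ℝ := fun i j => (w i j - w (i - 1) j) / hx

/-- `[D_y w]_{i,j} = (w_{i,j+1/2} - w_{i,j-1/2})/h_y` for a y-edge array `w`. -/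
noncomputable def DY (hy : ℝ) (w : ℕ → ℕ → ℝ) : ℕ → ℕ → ℝ := fun i j => (w i j - w i (j - 1)) / hy

/-- Five-point discrete Laplacian `[Δ_h g]_{i,j}` (meaningful at interior cells). -/
noncomputable def lapH (hx hy : ℝ) (g : ℕ → ℕ → ℝ) : ℕ → ℕ → ℝ := fun i j =>
  (g (i + 1) j - 2 * g i j + g (i - 1) j) / hx ^ 2 +
  (g i (j + 1) - 2 * g i j + g i (j - 1)) / hy ^ 2

/-- The discrete homogeneous Neumann boundary condition for a grid function. -/
noncomputable def NeumannBC (Nx Ny : ℕ) (g : ℕ → ℕ → ℝ) : Prop :=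
  (∀ j ∈ Finset.Icc 1 Ny, g 0 j = g 1 j ∧ g (Nx + 1) j = g Nx j) ∧
  (∀ i ∈ Finset.Icc 1 Nx, g i 0 = g i 1 ∧ g i (Ny + 1) = g i Ny)

/-- Extension of interior data to ghost cells via the discrete Neumann BC
(clamping of indices to the interior range). -/
noncomputable def extN (Nx Ny : ℕ) (u : ℕ → ℕ → ℝ) : ℕ → ℕ → ℝ := fun i j =>
  u (min (max i 1) Nx) (min (max j 1) Ny)

/-- `‖∇_h g‖² = (d_x g, d_x g)_x + (d_y g, d_y g)_y`. -/
noncomputable def gradSq (Nx Ny : ℕ) (hx hy : ℝ) (g : ℕ → ℕ → ℝ) : ℝ :=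
  innerX Nx Ny hx hy (dX hx g) (dX hx g) + innerY Nx Ny hx hy (dY hy g) (dY hy g)

/-- `Δ_h² g`, where `Δ_h g` is extended to ghost cells via its own Neumann BC. -/
noncomputable def lap2H (Nx Ny : ℕ) (hx hy : ℝ) (g : ℕ → ℕ → ℝ) : ℕ → ℕ → ℝ :=
  lapH hx hy (extN Nx Ny (lapH hx hy g))

/-- `Δ_h³ g`, where `Δ_h g`, `Δ_h² g` are extended to ghost cells via their own Neumann BC. -/
noncomputable def lap3H (Nx Ny : ℕ) (hx hy : ℝ) (g : ℕ → ℕ → ℝ) : ℕ → ℕ → ℝ :=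
  lapH hx hy (extN Nx Ny (lap2H Nx Ny hx hy g))

/-- Discrete energy `E_1^h(g) = Σ h_x h_y F(g_{ij})` with `F(s) = s⁴/4`. -/
noncomputable def E1h (Nx Ny : ℕ) (hx hy : ℝ) (g : ℕ → ℕ → ℝ) : ℝ :=
  ∑ i ∈ Finset.Icc 1 Nx, ∑ j ∈ Finset.Icc 1 Ny, hx * hy * (g i j ^ 4 / 4)

theorem extN_of_mem {Nx Ny : ℕ} (u : ℕ → ℕ → ℝ) {i j : ℕ} (hi : i ∈ Icc 1 Nx)
    (hj : j ∈ Icc 1 Ny) : extN Nx Ny u i j = u i j := by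
  simp only [mem_Icc] at hi hj
  simp only [extN]
  congr 1 <;> omega

theorem neumannBC_extN (Nx Ny : ℕ) (u : ℕ → ℕ → ℝ) : NeumannBC Nx Ny (extN Nx Ny u) :=
  ⟨fun _ _ => ⟨rfl, by simp only [extN]; congr 1; omega⟩,
    fun _ _ => ⟨rfl, by simp only [extN]; congr 1; omega⟩⟩

theorem extN_congr {Nx Ny : ℕ} (hNx : 1 ≤ Nx) (hNy : 1 ≤ Ny) {u v : ℕ → ℕ → ℝ}
    (h : ∀ i ∈ Icc 1 Nx, ∀ j ∈ Icc 1 Ny, u i j = v i j) : extN Nx Ny u = extN Nx Ny v := by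
  funext i j
  exact h _ (mem_Icc.mpr ⟨by omega, by omega⟩) _ (mem_Icc.mpr ⟨by omega, by omega⟩)

namespace NeumannBC

variable {Nx Ny : ℕ} {u v : ℕ → ℕ → ℝ}

theorem sub (hu : NeumannBC Nx Ny u) (hv : NeumannBC Nx Ny v) :
    NeumannBC Nx Ny (fun i j => u i j - v i j) :=
  ⟨fun j hj => by simp only [(hu.1 j hj).1, (hu.1 j hj).2, (hv.1 j hj).1, (hv.1 j hj).2, and_self],
    fun i hi => by simp only [(hu.2 i hi).1, (hu.2 i hi).2, (hv.2 i hi).1, (hv.2 i hi).2, and_self]⟩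

theorem const_mul (a : ℝ) (hu : NeumannBC Nx Ny u) : NeumannBC Nx Ny (fun i j => a * u i j) :=
  ⟨fun j hj => by simp only [(hu.1 j hj).1, (hu.1 j hj).2, and_self],
    fun i hi => by simp only [(hu.2 i hi).1, (hu.2 i hi).2, and_self]⟩

theorem extN_apply_of_le_left (hu : NeumannBC Nx Ny u) (hNx : 1 ≤ Nx) {i j : ℕ} (hi : i ≤ Nx + 1)
    (hj : j ∈ Icc 1 Ny) : extN Nx Ny u i j = u i j := by
  have hj' : min (max j 1) Ny = j := by simp only [mem_Icc] at hj; omega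
  simp only [extN, hj']
  obtain rfl | rfl | hi' : i = 0 ∨ i = Nx + 1 ∨ (1 ≤ i ∧ i ≤ Nx) := by omega
  · rw [(hu.1 j hj).1]; congr 1; omega
  · rw [(hu.1 j hj).2]; congr 1; omega
  · congr 1; omega

theorem extN_apply_of_le_right (hu : NeumannBC Nx Ny u) (hNy : 1 ≤ Ny) {i j : ℕ} (hi : i ∈ Icc 1 Nx)
    (hj : j ≤ Ny + 1) : extN Nx Ny u i j = u i j := by
  have hi' : min (max i 1) Nx = i := by simp only [mem_Icc] at hi; omega
  simp only [extN, hi']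
  obtain rfl | rfl | hj' : j = 0 ∨ j = Ny + 1 ∨ (1 ≤ j ∧ j ≤ Ny) := by omega
  · rw [(hu.2 i hi).1]; congr 1; omega
  · rw [(hu.2 i hi).2]; congr 1; omega
  · congr 1; omega

theorem lapH_extN (hu : NeumannBC Nx Ny u) (hx hy : ℝ) {i j : ℕ} (hi : i ∈ Icc 1 Nx)
    (hj : j ∈ Icc 1 Ny) : lapH hx hy (extN Nx Ny u) i j = lapH hx hy u i j := by
  have hi' := mem_Icc.mp hi
  have hj' := mem_Icc.mp hj
  simp only [lapH, hu.extN_apply_of_le_left (by omega) (by omega : i + 1 ≤ Nx + 1) hj,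
    hu.extN_apply_of_le_left (by omega) (by omega : i - 1 ≤ Nx + 1) hj, extN_of_mem u hi hj,
    hu.extN_apply_of_le_right (by omega) hi (by omega : j + 1 ≤ Ny + 1),
    hu.extN_apply_of_le_right (by omega) hi (by omega : j - 1 ≤ Ny + 1)]

end NeumannBC

theorem lapH_congr {Nx Ny : ℕ} {u v : ℕ → ℕ → ℝ} (hu : NeumannBC Nx Ny u) (hv : NeumannBC Nx Ny v)
    (h : ∀ i ∈ Icc 1 Nx, ∀ j ∈ Icc 1 Ny, u i j = v i j) (hx hy : ℝ) :
    ∀ i ∈ Icc 1 Nx, ∀ j ∈ Icc 1 Ny, lapH hx hy u i j = lapH hx hy v i j := by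
  intro i hi j hj
  have hNx : 1 ≤ Nx := (mem_Icc.mp hi).1.trans (mem_Icc.mp hi).2
  have hNy : 1 ≤ Ny := (mem_Icc.mp hj).1.trans (mem_Icc.mp hj).2
  rw [← hu.lapH_extN hx hy hi hj, ← hv.lapH_extN hx hy hi hj, extN_congr hNx hNy h]

section InnerProduct

variable {Nx Ny : ℕ} {hx hy : ℝ}

theorem innerM_comm (u v : ℕ → ℕ → ℝ) : innerM Nx Ny hx hy u v = innerM Nx Ny hx hy v u := by
  simp only [innerM, mul_right_comm _ (u _ _)]

theorem innerM_add_left (u u' v : ℕ → ℕ → ℝ) :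
    innerM Nx Ny hx hy (u + u') v = innerM Nx Ny hx hy u v + innerM Nx Ny hx hy u' v := by
  simp only [innerM, Pi.add_apply, mul_add, add_mul, sum_add_distrib]

theorem innerM_smul_left (a : ℝ) (u v : ℕ → ℕ → ℝ) :
    innerM Nx Ny hx hy (a • u) v = a * innerM Nx Ny hx hy u v := by
  simp only [innerM, Pi.smul_apply, smul_eq_mul, mul_sum]
  exact sum_congr rfl fun _ _ => sum_congr rfl fun _ _ => by ring

theorem innerM_add_right (u v v' : ℕ → ℕ → ℝ) :
    innerM Nx Ny hx hy u (v + v') = innerM Nx Ny hx hy u v + innerM Nx Ny hx hy u v' := by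
  rw [innerM_comm, innerM_add_left, innerM_comm v, innerM_comm v']

theorem innerM_smul_right (a : ℝ) (u v : ℕ → ℕ → ℝ) :
    innerM Nx Ny hx hy u (a • v) = a * innerM Nx Ny hx hy u v := by
  rw [innerM_comm, innerM_smul_left, innerM_comm]

theorem innerM_sub_right (u v v' : ℕ → ℕ → ℝ) :
    innerM Nx Ny hx hy u (fun i j => v i j - v' i j)
      = innerM Nx Ny hx hy u v - innerM Nx Ny hx hy u v' := by
  simp only [innerM, mul_sub, sum_sub_distrib]

theorem innerM_congr {u u' v v' : ℕ → ℕ → ℝ} (hu : ∀ i ∈ Icc 1 Nx, ∀ j ∈ Icc 1 Ny, u i j = u' i j)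
    (hv : ∀ i ∈ Icc 1 Nx, ∀ j ∈ Icc 1 Ny, v i j = v' i j) :
    innerM Nx Ny hx hy u v = innerM Nx Ny hx hy u' v' :=
  sum_congr rfl fun i hi => sum_congr rfl fun j hj => by rw [hu i hi j hj, hv i hi j hj]

theorem innerM_zero_right (u : ℕ → ℕ → ℝ) : innerM Nx Ny hx hy u (fun _ _ => 0) = 0 := by
  simp [innerM]

theorem mul_mul_mul_self_nonneg (hhx : 0 < hx) (hhy : 0 < hy) (a : ℝ) : 0 ≤ hx * hy * a * a := by
  rw [mul_assoc]; exact mul_nonneg (by positivity) (mul_self_nonneg a)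

theorem innerM_self_nonneg (hhx : 0 < hx) (hhy : 0 < hy) (u : ℕ → ℕ → ℝ) :
    0 ≤ innerM Nx Ny hx hy u u :=
  sum_nonneg fun _ _ => sum_nonneg fun _ _ => mul_mul_mul_self_nonneg hhx hhy _

theorem gradSq_nonneg (hhx : 0 < hx) (hhy : 0 < hy) (u : ℕ → ℕ → ℝ) : 0 ≤ gradSq Nx Ny hx hy u :=
  add_nonneg (sum_nonneg fun _ _ => sum_nonneg fun _ _ => mul_mul_mul_self_nonneg hhx hhy _)
    (sum_nonneg fun _ _ => sum_nonneg fun _ _ => mul_mul_mul_self_nonneg hhx hhy _)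

theorem eq_zero_of_innerM_self_eq_zero (hhx : 0 < hx) (hhy : 0 < hy) {u : ℕ → ℕ → ℝ}
    (h : innerM Nx Ny hx hy u u = 0) :
    ∀ i ∈ Icc 1 Nx, ∀ j ∈ Icc 1 Ny, u i j = 0 := by
  intro i hi j hj
  have hrow := (sum_eq_zero_iff_of_nonneg fun i _ =>
    sum_nonneg fun j _ => mul_mul_mul_self_nonneg hhx hhy (u i j)).mp h i hi
  have hcell := (sum_eq_zero_iff_of_nonneg fun j _ =>
    mul_mul_mul_self_nonneg hhx hhy (u i j)).mp hrow j hj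
  simpa [hhx.ne', hhy.ne'] using hcell

end InnerProduct

theorem sum_Icc_secondDiff_mul (N : ℕ) (hN : 1 ≤ N) (u v : ℕ → ℝ) :
    ∑ i ∈ Icc 1 N, (u (i + 1) - 2 * u i + u (i - 1)) * v i
      = (u (N + 1) - u N) * v N - (u 1 - u 0) * v 1
        - ∑ i ∈ Icc 1 (N - 1), (u (i + 1) - u i) * (v (i + 1) - v i) := by
  induction N, hN using Nat.le_induction with
  | base =>
    rw [Icc_self, sum_singleton, Nat.sub_self, Icc_eq_empty_of_lt zero_lt_one, sum_empty]
    ring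
  | succ n hn ih =>
    obtain ⟨m, rfl⟩ : ∃ m, n = m + 1 := ⟨n - 1, by omega⟩
    rw [sum_Icc_succ_top (by omega), ih, Nat.add_sub_cancel, Nat.add_sub_cancel,
      sum_Icc_succ_top (by omega : 1 ≤ m + 1)]
    ring

theorem sum_Icc_secondDiff_mul_of_neumann (N : ℕ) (u v : ℕ → ℝ) (h0 : u 0 = u 1)
    (hN : u (N + 1) = u N) :
    ∑ i ∈ Icc 1 N, (u (i + 1) - 2 * u i + u (i - 1)) * v i
      = -∑ i ∈ Icc 1 (N - 1), (u (i + 1) - u i) * (v (i + 1) - v i) := by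
  rcases Nat.eq_zero_or_pos N with rfl | hpos
  · simp
  · rw [sum_Icc_secondDiff_mul N hpos, h0, hN]; ring

section SummationByParts

variable {Nx Ny : ℕ} {hx hy : ℝ} {u : ℕ → ℕ → ℝ}

theorem innerM_lapH_eq (hhx : hx ≠ 0) (hhy : hy ≠ 0) (hu : NeumannBC Nx Ny u) (v : ℕ → ℕ → ℝ) :
    innerM Nx Ny hx hy (lapH hx hy u) v
      = -(innerX Nx Ny hx hy (dX hx u) (dX hx v) + innerY Nx Ny hx hy (dY hy u) (dY hy v)) := by
  have hX : ∀ j ∈ Icc 1 Ny, ∑ i ∈ Icc 1 Nx, (u (i + 1) j - 2 * u i j + u (i - 1) j) * v i j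
      = -∑ i ∈ Icc 1 (Nx - 1), (u (i + 1) j - u i j) * (v (i + 1) j - v i j) := fun j hj =>
    sum_Icc_secondDiff_mul_of_neumann Nx (u · j) (v · j) (hu.1 j hj).1 (hu.1 j hj).2
  have hY : ∀ i ∈ Icc 1 Nx, ∑ j ∈ Icc 1 Ny, (u i (j + 1) - 2 * u i j + u i (j - 1)) * v i j
      = -∑ j ∈ Icc 1 (Ny - 1), (u i (j + 1) - u i j) * (v i (j + 1) - v i j) := fun i hi =>
    sum_Icc_secondDiff_mul_of_neumann Ny (u i ·) (v i ·) (hu.2 i hi).1 (hu.2 i hi).2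
  calc innerM Nx Ny hx hy (lapH hx hy u) v
      = hy / hx * ∑ j ∈ Icc 1 Ny, ∑ i ∈ Icc 1 Nx, (u (i + 1) j - 2 * u i j + u (i - 1) j) * v i j
        + hx / hy * ∑ i ∈ Icc 1 Nx, ∑ j ∈ Icc 1 Ny,
          (u i (j + 1) - 2 * u i j + u i (j - 1)) * v i j := by
        rw [sum_comm, mul_sum, mul_sum, ← sum_add_distrib]
        refine sum_congr rfl fun i _ => ?_
        rw [mul_sum, mul_sum, ← sum_add_distrib]
        refine sum_congr rfl fun j _ => ?_
        simp only [lapH]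
        field_simp
    _ = -(innerX Nx Ny hx hy (dX hx u) (dX hx v) + innerY Nx Ny hx hy (dY hy u) (dY hy v)) := by
        rw [sum_congr rfl hX, sum_congr rfl hY, innerX, innerY, sum_comm (s := Icc 1 (Nx - 1))]
        simp only [dX, dY, sum_neg_distrib, mul_sum, mul_neg, neg_add]
        congr 1 <;> refine congrArg _ (sum_congr rfl fun _ _ => sum_congr rfl fun _ _ => ?_) <;>
          field_simp

theorem innerM_lapH_comm (hhx : hx ≠ 0) (hhy : hy ≠ 0) {v : ℕ → ℕ → ℝ} (hu : NeumannBC Nx Ny u)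
    (hv : NeumannBC Nx Ny v) :
    innerM Nx Ny hx hy (lapH hx hy u) v = innerM Nx Ny hx hy u (lapH hx hy v) := by
  rw [innerM_comm u, innerM_lapH_eq hhx hhy hu, innerM_lapH_eq hhx hhy hv]
  simp only [innerX, innerY, mul_right_comm _ (dX hx u _ _), mul_right_comm _ (dY hy u _ _)]

theorem innerM_lapH_self (hhx : hx ≠ 0) (hhy : hy ≠ 0) (hu : NeumannBC Nx Ny u) :
    innerM Nx Ny hx hy (lapH hx hy u) u = -gradSq Nx Ny hx hy u :=
  innerM_lapH_eq hhx hhy hu u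

end SummationByParts

noncomputable def lapL (hx hy : ℝ) : (ℕ → ℕ → ℝ) →ₗ[ℝ] (ℕ → ℕ → ℝ) where
  toFun := lapH hx hy
  map_add' u v := by funext i j; simp only [lapH, Pi.add_apply]; ring
  map_smul' a u := by
    funext i j; simp only [lapH, Pi.smul_apply, smul_eq_mul, RingHom.id_apply]; ring

/-- The part of `2 W^{n+1/2}` in (iii) that is linear in `Z^{n+1}`, once `R^{n+1}` is eliminated
by (iv) (which makes `c = 1 / (2 s²)`). -/
noncomputable def chemPot (Nx Ny : ℕ) (hx hy α c : ℝ) (f : ℕ → ℕ → ℝ) :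
    (ℕ → ℕ → ℝ) →ₗ[ℝ] (ℕ → ℕ → ℝ) where
  toFun z := extN Nx Ny fun i j =>
    lap2H Nx Ny hx hy z i j + α * z i j + c * innerM Nx Ny hx hy f z * f i j
  map_add' u v := by
    funext i j; simp only [extN, lap2H, lapH, Pi.add_apply, innerM_add_right]; ring
  map_smul' a u := by
    funext i j
    simp only [extN, lap2H, lapH, Pi.smul_apply, smul_eq_mul, innerM_smul_right,
      RingHom.id_apply]
    ring

/-- Eliminating `Ψ^{n+1}` by (ii) turns (i) into `schemeOp z = b` for the unknown `Z^{n+1}`,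
with `κ = M Δt / (2 (2 / Δt + β))`. -/
noncomputable def schemeOp (Nx Ny : ℕ) (hx hy κ α c : ℝ) (f : ℕ → ℕ → ℝ) :
    (ℕ → ℕ → ℝ) →ₗ[ℝ] (ℕ → ℕ → ℝ) :=
  LinearMap.id - κ • lapL hx hy ∘ₗ chemPot Nx Ny hx hy α c f

section LinearizedProblem

variable {Nx Ny : ℕ} {hx hy κ α c : ℝ} {f : ℕ → ℕ → ℝ}

theorem chemPot_apply_of_mem (z : ℕ → ℕ → ℝ) {i j : ℕ} (hi : i ∈ Icc 1 Nx) (hj : j ∈ Icc 1 Ny) :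
    chemPot Nx Ny hx hy α c f z i j
      = lap2H Nx Ny hx hy z i j + α * z i j + c * innerM Nx Ny hx hy f z * f i j :=
  extN_of_mem (fun i j => lap2H Nx Ny hx hy z i j + α * z i j + c * innerM Nx Ny hx hy f z * f i j)
    hi hj

theorem neumannBC_chemPot (z : ℕ → ℕ → ℝ) : NeumannBC Nx Ny (chemPot Nx Ny hx hy α c f z) :=
  neumannBC_extN Nx Ny fun i j =>
    lap2H Nx Ny hx hy z i j + α * z i j + c * innerM Nx Ny hx hy f z * f i j

theorem schemeOp_apply (z : ℕ → ℕ → ℝ) (i j : ℕ) :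
    schemeOp Nx Ny hx hy κ α c f z i j = z i j - κ * lapH hx hy (chemPot Nx Ny hx hy α c f z) i j :=
  rfl

theorem chemPot_eq_zero_of_eq_zero {z : ℕ → ℕ → ℝ} (hz : NeumannBC Nx Ny z)
    (h : ∀ i ∈ Icc 1 Nx, ∀ j ∈ Icc 1 Ny, z i j = 0) :
    ∀ i ∈ Icc 1 Nx, ∀ j ∈ Icc 1 Ny, chemPot Nx Ny hx hy α c f z i j = 0 := by
  intro i hi j hj
  have hNx : 1 ≤ Nx := (mem_Icc.mp hi).1.trans (mem_Icc.mp hi).2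
  have hNy : 1 ≤ Ny := (mem_Icc.mp hj).1.trans (mem_Icc.mp hj).2
  have hlap : extN Nx Ny (lapH hx hy z) = 0 := by
    rw [extN_congr hNx hNy (lapH_congr hz ⟨fun _ _ => ⟨rfl, rfl⟩, fun _ _ => ⟨rfl, rfl⟩⟩ h hx hy)]
    funext a b; simp [extN, lapH]
  rw [chemPot_apply_of_mem z hi hj, lap2H, hlap, h i hi j hj,
    innerM_congr (fun _ _ _ _ => rfl) h, innerM_zero_right]
  simp [lapH]

/-- Pairing `z = κ Δ_h μ` (with `μ = chemPot z`) with `μ` gives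
`‖Δ_h z‖² + α ‖z‖² + c (f, z)² = -κ ‖∇_h μ‖²`, so `Δ_h z = 0`, and then
`‖z‖² = κ (μ, Δ_h z) = 0`. -/
theorem eq_zero_of_schemeOp_eq_zero (hhx : 0 < hx) (hhy : 0 < hy) (hκ : 0 ≤ κ) (hα : 0 ≤ α)
    (hc : 0 ≤ c) {z : ℕ → ℕ → ℝ} (hz : NeumannBC Nx Ny z)
    (h : ∀ i ∈ Icc 1 Nx, ∀ j ∈ Icc 1 Ny, schemeOp Nx Ny hx hy κ α c f z i j = 0) :
    ∀ i ∈ Icc 1 Nx, ∀ j ∈ Icc 1 Ny, z i j = 0 := by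
  set w := chemPot Nx Ny hx hy α c f z
  have hw : NeumannBC Nx Ny w := neumannBC_chemPot z
  have hzw : ∀ i ∈ Icc 1 Nx, ∀ j ∈ Icc 1 Ny, z i j = (κ • lapH hx hy w) i j := fun i hi j hj =>
    sub_eq_zero.mp (h i hi j hj)
  have hlower : innerM Nx Ny hx hy (lapH hx hy z) (lapH hx hy z) ≤ innerM Nx Ny hx hy w z := by
    have hexpand : innerM Nx Ny hx hy w z
        = innerM Nx Ny hx hy (lapH hx hy z) (lapH hx hy z) + α * innerM Nx Ny hx hy z z
          + c * innerM Nx Ny hx hy f z ^ 2 := by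
      rw [innerM_congr (u' := lapH hx hy (extN Nx Ny (lapH hx hy z)) + α • z
          + (c * innerM Nx Ny hx hy f z) • f) (fun i hi j hj => chemPot_apply_of_mem z hi hj)
          (fun _ _ _ _ => rfl),
        innerM_add_left, innerM_add_left, innerM_smul_left, innerM_smul_left,
        innerM_lapH_comm hhx.ne' hhy.ne' (neumannBC_extN Nx Ny _) hz,
        innerM_congr (fun i hi j hj => extN_of_mem _ hi hj) (fun _ _ _ _ => rfl)]
      ring
    have hzz := mul_nonneg hα (innerM_self_nonneg (Nx := Nx) (Ny := Ny) hhx hhy z)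
    have hfz := mul_nonneg hc (sq_nonneg (innerM Nx Ny hx hy f z))
    linarith
  have hupper : innerM Nx Ny hx hy w z ≤ 0 := by
    rw [innerM_comm, innerM_congr hzw (fun _ _ _ _ => rfl), innerM_smul_left,
      innerM_lapH_self hhx.ne' hhy.ne' hw]
    exact mul_nonpos_of_nonneg_of_nonpos hκ (neg_nonpos.mpr (gradSq_nonneg hhx hhy w))
  have hlapz := eq_zero_of_innerM_self_eq_zero hhx hhy
    (le_antisymm (hlower.trans hupper) (innerM_self_nonneg hhx hhy _))
  refine eq_zero_of_innerM_self_eq_zero hhx hhy ?_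
  rw [innerM_congr hzw (fun _ _ _ _ => rfl), innerM_smul_left,
    innerM_lapH_comm hhx.ne' hhy.ne' hw hz, innerM_congr (fun _ _ _ _ => rfl) hlapz,
    innerM_zero_right, mul_zero]

end LinearizedProblem

def interiorCells (Nx Ny : ℕ) : Finset (ℕ × ℕ) := Icc 1 Nx ×ˢ Icc 1 Ny

theorem mk_mem_interiorCells {Nx Ny i j : ℕ} (hi : i ∈ Icc 1 Nx) (hj : j ∈ Icc 1 Ny) :
    (i, j) ∈ interiorCells Nx Ny :=
  mem_product.mpr ⟨hi, hj⟩

noncomputable def restrictInterior (Nx Ny : ℕ) :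
    (ℕ → ℕ → ℝ) →ₗ[ℝ] (interiorCells Nx Ny → ℝ) where
  toFun g p := g p.1.1 p.1.2
  map_add' _ _ := rfl
  map_smul' _ _ := rfl

noncomputable def extendInterior (Nx Ny : ℕ) :
    (interiorCells Nx Ny → ℝ) →ₗ[ℝ] (ℕ → ℕ → ℝ) where
  toFun v := extN Nx Ny fun i j => if h : (i, j) ∈ interiorCells Nx Ny then v ⟨(i, j), h⟩ else 0
  map_add' v v' := by funext i j; simp only [extN, Pi.add_apply]; split_ifs <;> simp
  map_smul' a v := by funext i j; simp only [extN, Pi.smul_apply]; split_ifs <;> simp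

theorem restrictInterior_extendInterior {Nx Ny : ℕ} (v : interiorCells Nx Ny → ℝ) :
    restrictInterior Nx Ny (extendInterior Nx Ny v) = v := by
  funext ⟨⟨i, j⟩, hij⟩
  obtain ⟨hi, hj⟩ := mem_product.mp hij
  simp only [restrictInterior, extendInterior, LinearMap.coe_mk, AddHom.coe_mk,
    extN_of_mem _ hi hj, dif_pos hij]

theorem neumannBC_extendInterior {Nx Ny : ℕ} (v : interiorCells Nx Ny → ℝ) :
    NeumannBC Nx Ny (extendInterior Nx Ny v) :=
  neumannBC_extN Nx Ny fun i j => if h : (i, j) ∈ interiorCells Nx Ny then v ⟨(i, j), h⟩ else 0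

theorem exists_neumannBC_schemeOp_eq {Nx Ny : ℕ} {hx hy κ α c : ℝ} (f : ℕ → ℕ → ℝ)
    (hhx : 0 < hx) (hhy : 0 < hy) (hκ : 0 ≤ κ) (hα : 0 ≤ α) (hc : 0 ≤ c) (b : ℕ → ℕ → ℝ) :
    ∃ z, NeumannBC Nx Ny z ∧
      ∀ i ∈ Icc 1 Nx, ∀ j ∈ Icc 1 Ny, schemeOp Nx Ny hx hy κ α c f z i j = b i j := by
  set T := restrictInterior Nx Ny ∘ₗ schemeOp Nx Ny hx hy κ α c f ∘ₗ extendInterior Nx Ny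
  have hT : Function.Injective T := by
    refine (injective_iff_map_eq_zero T).mpr fun v hv => ?_
    have hz := eq_zero_of_schemeOp_eq_zero hhx hhy hκ hα hc (neumannBC_extendInterior v)
      fun i hi j hj => congrFun hv ⟨(i, j), mk_mem_interiorCells hi hj⟩
    rw [← restrictInterior_extendInterior v]
    funext ⟨⟨i, j⟩, hij⟩
    exact hz i (mem_product.mp hij).1 j (mem_product.mp hij).2
  obtain ⟨v, hv⟩ := LinearMap.injective_iff_surjective.mp hT (restrictInterior Nx Ny b)
  exact ⟨extendInterior Nx Ny v, neumannBC_extendInterior v,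
    fun i hi j hj => congrFun hv ⟨(i, j), mk_mem_interiorCells hi hj⟩⟩

/-- The scheme (i)–(iv), with `g`, `f`, `s` standing for `2 Δ_h Z̃^{n+1/2}`, `F'(Z̃^{n+1/2})`
and `√(E_1^h(Z̃^{n+1/2}))`. -/
def IsSchemeStep (Nx Ny : ℕ) (hx hy Δt M β α s : ℝ) (g f Zn W0 Ψn : ℕ → ℕ → ℝ) (Rn : ℝ)
    (Zp Wp Ψp : ℕ → ℕ → ℝ) (Rp : ℝ) : Prop :=
  NeumannBC Nx Ny Zp ∧ NeumannBC Nx Ny Wp ∧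
    (∀ i ∈ Icc 1 Nx, ∀ j ∈ Icc 1 Ny,
      Ψp i j - Ψn i j + β * Δt * ((Ψp i j + Ψn i j) / 2) =
        M * Δt * lapH hx hy (fun a b => (Wp a b + W0 a b) / 2) i j) ∧
    (∀ i ∈ Icc 1 Nx, ∀ j ∈ Icc 1 Ny, Δt * ((Ψp i j + Ψn i j) / 2) = Zp i j - Zn i j) ∧
    (∀ i ∈ Icc 1 Nx, ∀ j ∈ Icc 1 Ny,
      (Wp i j + W0 i j) / 2 =
        lap2H Nx Ny hx hy (fun a b => (Zp a b + Zn a b) / 2) i j + g i j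
          + α * ((Zp i j + Zn i j) / 2) + (Rp + Rn) / 2 / s * f i j) ∧
    Rp - Rn = 1 / (2 * s) * innerM Nx Ny hx hy f (fun i j => Zp i j - Zn i j)

section SchemeStep

variable {Nx Ny : ℕ} {hx hy Δt M β α s : ℝ} {g f Zn W0 Ψn : ℕ → ℕ → ℝ} {Rn : ℝ}

theorem exists_isSchemeStep (hhx : 0 < hx) (hhy : 0 < hy) (hΔt : 0 < Δt) (hM : 0 < M)
    (hβ : 0 < β) (hα : 0 ≤ α) (hW0 : NeumannBC Nx Ny W0) :
    ∃ Zp Wp Ψp Rp, IsSchemeStep Nx Ny hx hy Δt M β α s g f Zn W0 Ψn Rn Zp Wp Ψp Rp := by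
  set γ := 2 / Δt + β
  have hγ : 0 < γ := by positivity
  set c : ℝ := 1 / (2 * s ^ 2)
  set κ := M * Δt / (2 * γ) with hκ
  set R : (ℕ → ℕ → ℝ) → ℝ := fun Z =>
    Rn + 1 / (2 * s) * innerM Nx Ny hx hy f (fun i j => Z i j - Zn i j)
  set μ : (ℕ → ℕ → ℝ) → ℕ → ℕ → ℝ := fun Z => extN Nx Ny fun i j =>
    lap2H Nx Ny hx hy (fun a b => (Z a b + Zn a b) / 2) i j + g i j
      + α * ((Z i j + Zn i j) / 2) + (R Z + Rn) / 2 / s * f i j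
  have hμ : ∀ Z, μ Z = μ (fun _ _ => 0) + (1 / 2 : ℝ) • chemPot Nx Ny hx hy α c f Z := by
    intro Z; funext a b
    simp only [μ, R, chemPot, LinearMap.coe_mk, AddHom.coe_mk, extN, lap2H, lapH, Pi.add_apply,
      Pi.smul_apply, smul_eq_mul, innerM_sub_right, innerM_zero_right]
    ring
  -- `μ Z` is the midpoint `W^{n+1/2}` built from `Z`; it is affine in `Z` with linear part
  -- `chemPot / 2`, so (i) becomes `γ • schemeOp Z = γ • b` for the `b` below.
  obtain ⟨Z, hZ, hZb⟩ := exists_neumannBC_schemeOp_eq (κ := κ) (α := α) (c := c) f hhx hhy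
    (by positivity) hα (by positivity)
    (fun i j => Zn i j + (2 * Ψn i j + M * Δt * lapH hx hy (μ fun _ _ => 0) i j) / γ)
  refine ⟨Z, fun i j => 2 * μ Z i j - W0 i j, fun i j => 2 * (Z i j - Zn i j) / Δt - Ψn i j, R Z,
    hZ, ((neumannBC_extN Nx Ny _).const_mul 2).sub hW0, fun i hi j hj => ?_, fun i _ j _ => ?_,
    fun i hi j hj => ?_, ?_⟩
  · have hmid : (fun a b => (2 * μ Z a b - W0 a b + W0 a b) / 2) = μ Z := by funext a b; ring
    have hlap : lapH hx hy (μ Z) i j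
        = lapH hx hy (μ fun _ _ => 0) i j
          + 1 / 2 * lapH hx hy (chemPot Nx Ny hx hy α c f Z) i j := by
      rw [hμ Z]; simp only [lapH, Pi.add_apply, Pi.smul_apply, smul_eq_mul]; ring
    have hb := hZb i hi j hj
    rw [schemeOp_apply] at hb
    have hκγ : κ * γ = M * Δt / 2 := by rw [hκ]; field_simp
    have hdiv : (2 * Ψn i j + M * Δt * lapH hx hy (μ fun _ _ => 0) i j) / γ * γ
        = 2 * Ψn i j + M * Δt * lapH hx hy (μ fun _ _ => 0) i j := div_mul_cancel₀ _ hγ.ne'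
    have hinv : Δt / Δt = 1 := div_self hΔt.ne'
    beta_reduce
    rw [hmid, hlap]
    linear_combination γ * hb + β * (Z i j - Zn i j) * hinv
      + lapH hx hy (chemPot Nx Ny hx hy α c f Z) i j * hκγ + hdiv
  · field_simp
    ring
  · simp only [μ]
    rw [extN_of_mem _ hi hj]
    ring
  · ring

theorem IsSchemeStep.sub_linearized (hΔt : 0 < Δt) (hβ : 0 < β) {Zp Wp Ψp Zp' Wp' Ψp' : ℕ → ℕ → ℝ}
    {Rp Rp' : ℝ} (h' : IsSchemeStep Nx Ny hx hy Δt M β α s g f Zn W0 Ψn Rn Zp' Wp' Ψp' Rp')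
    (h : IsSchemeStep Nx Ny hx hy Δt M β α s g f Zn W0 Ψn Rn Zp Wp Ψp Rp) :
    Rp' - Rp = 1 / (2 * s) * innerM Nx Ny hx hy f (fun i j => Zp' i j - Zp i j) ∧
      (∀ i ∈ Icc 1 Nx, ∀ j ∈ Icc 1 Ny, Wp' i j - Wp i j
        = chemPot Nx Ny hx hy α (1 / (2 * s ^ 2)) f (fun i j => Zp' i j - Zp i j) i j) ∧
      ∀ i ∈ Icc 1 Nx, ∀ j ∈ Icc 1 Ny,
        schemeOp Nx Ny hx hy (M * Δt / (2 * (2 / Δt + β))) α (1 / (2 * s ^ 2)) f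
          (fun i j => Zp' i j - Zp i j) i j = 0 := by
  obtain ⟨-, hW', hI', hII', hIII', hIV'⟩ := h'
  obtain ⟨-, hW, hI, hII, hIII, hIV⟩ := h
  set z : ℕ → ℕ → ℝ := fun i j => Zp' i j - Zp i j
  have hr : Rp' - Rp = 1 / (2 * s) * innerM Nx Ny hx hy f z := by
    rw [innerM_sub_right] at hIV' hIV ⊢
    linear_combination hIV' - hIV
  have hw : ∀ i ∈ Icc 1 Nx, ∀ j ∈ Icc 1 Ny,
      Wp' i j - Wp i j = chemPot Nx Ny hx hy α (1 / (2 * s ^ 2)) f z i j := by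
    intro i hi j hj
    have hlap2 : lap2H Nx Ny hx hy (fun a b => (Zp' a b + Zn a b) / 2) i j
        - lap2H Nx Ny hx hy (fun a b => (Zp a b + Zn a b) / 2) i j
        = 1 / 2 * lap2H Nx Ny hx hy z i j := by
      simp only [z, lap2H, lapH, extN]; ring
    rw [chemPot_apply_of_mem z hi hj]
    linear_combination 2 * hIII' i hi j hj - 2 * hIII i hi j hj + 2 * hlap2 + f i j / s * hr
  refine ⟨hr, hw, fun i hi j hj => ?_⟩
  rw [schemeOp_apply, ← lapH_congr (hW'.sub hW) (neumannBC_chemPot z) hw hx hy i hi j hj]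
  have hlapw : lapH hx hy (fun a b => (Wp' a b + W0 a b) / 2) i j
      - lapH hx hy (fun a b => (Wp a b + W0 a b) / 2) i j
      = 1 / 2 * lapH hx hy (fun a b => Wp' a b - Wp a b) i j := by
    simp only [lapH]; ring
  have hγ : 0 < 2 / Δt + β := by positivity
  have hκγ : M * Δt / (2 * (2 / Δt + β)) * (2 / Δt + β) = M * Δt / 2 := by field_simp
  have hinv : Δt / Δt = 1 := div_self hΔt.ne'
  refine (mul_eq_zero.mp ?_).resolve_left hγ.ne'
  linear_combination hI' i hi j hj - hI i hi j hj - (2 / Δt + β) * (hII' i hi j hj - hII i hi j hj)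
    + M * Δt * hlapw - lapH hx hy (fun a b => Wp' a b - Wp a b) i j * hκγ
    + (Ψp' i j - Ψp i j) * hinv

theorem IsSchemeStep.unique (hhx : 0 < hx) (hhy : 0 < hy) (hΔt : 0 < Δt) (hM : 0 < M)
    (hβ : 0 < β) (hα : 0 ≤ α) {Zp Wp Ψp Zp' Wp' Ψp' : ℕ → ℕ → ℝ} {Rp Rp' : ℝ}
    (h' : IsSchemeStep Nx Ny hx hy Δt M β α s g f Zn W0 Ψn Rn Zp' Wp' Ψp' Rp')
    (h : IsSchemeStep Nx Ny hx hy Δt M β α s g f Zn W0 Ψn Rn Zp Wp Ψp Rp) :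
    (∀ i ∈ Icc 1 Nx, ∀ j ∈ Icc 1 Ny, Zp' i j = Zp i j ∧ Wp' i j = Wp i j ∧ Ψp' i j = Ψp i j) ∧
      Rp' = Rp := by
  obtain ⟨hr, hw, hscheme⟩ := h'.sub_linearized hΔt hβ h
  have hz : NeumannBC Nx Ny fun i j => Zp' i j - Zp i j := h'.1.sub h.1
  have hz0 := eq_zero_of_schemeOp_eq_zero hhx hhy (by positivity) hα (by positivity) hz hscheme
  have hw0 := chemPot_eq_zero_of_eq_zero (hx := hx) (hy := hy) (α := α) (c := 1 / (2 * s ^ 2))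
    (f := f) hz hz0
  refine ⟨fun i hi j hj => ⟨sub_eq_zero.mp (hz0 i hi j hj),
    sub_eq_zero.mp ((hw i hi j hj).trans (hw0 i hi j hj)), ?_⟩, ?_⟩
  · have hΨ : Δt * (Ψp' i j - Ψp i j) = 0 := by
      linear_combination 2 * h'.2.2.2.1 i hi j hj - 2 * h.2.2.2.1 i hi j hj + 2 * hz0 i hi j hj
    exact sub_eq_zero.mp ((mul_eq_zero.mp hΨ).resolve_left hΔt.ne')
  · rw [← sub_eq_zero, hr, innerM_congr (fun _ _ _ _ => rfl) hz0, innerM_zero_right, mul_zero]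

end SchemeStep

theorem fully_discrete_unique_solvability_general
    (Nx Ny : ℕ)
    (hx hy : ℝ) (hhx : 0 < hx) (hhy : 0 < hy)
    (Δt M β α : ℝ) (hΔt : 0 < Δt) (hM : 0 < M) (hβ : 0 < β) (hα : 0 ≤ α)
    (Zm Zn W0 Ψn : ℕ → ℕ → ℝ) (Rn : ℝ)
    (hW0 : NeumannBC Nx Ny W0) :
    ∃ (Zp Wp Ψp : ℕ → ℕ → ℝ) (Rp : ℝ),
      (NeumannBC Nx Ny Zp ∧ NeumannBC Nx Ny Wp ∧
        (∀ i ∈ Finset.Icc 1 Nx, ∀ j ∈ Finset.Icc 1 Ny,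
          Ψp i j - Ψn i j + β * Δt * ((Ψp i j + Ψn i j) / 2) =
            M * Δt * lapH hx hy (fun a b => (Wp a b + W0 a b) / 2) i j) ∧
        (∀ i ∈ Finset.Icc 1 Nx, ∀ j ∈ Finset.Icc 1 Ny,
          Δt * ((Ψp i j + Ψn i j) / 2) = Zp i j - Zn i j) ∧
        (∀ i ∈ Finset.Icc 1 Nx, ∀ j ∈ Finset.Icc 1 Ny,
          (Wp i j + W0 i j) / 2 =
            lap2H Nx Ny hx hy (fun a b => (Zp a b + Zn a b) / 2) i j
            + 2 * lapH hx hy (fun a b => (3 * Zn a b - Zm a b) / 2) i j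
            + α * ((Zp i j + Zn i j) / 2)
            + (Rp + Rn) / 2 /
                Real.sqrt (E1h Nx Ny hx hy (fun a b => (3 * Zn a b - Zm a b) / 2)) *
                ((3 * Zn i j - Zm i j) / 2) ^ 3) ∧
        (Rp - Rn =
          1 / (2 * Real.sqrt (E1h Nx Ny hx hy (fun a b => (3 * Zn a b - Zm a b) / 2))) *
            innerM Nx Ny hx hy (fun i j => ((3 * Zn i j - Zm i j) / 2) ^ 3)
              (fun i j => Zp i j - Zn i j))) ∧
      (∀ (Zp' Wp' Ψp' : ℕ → ℕ → ℝ) (Rp' : ℝ),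
        (NeumannBC Nx Ny Zp' ∧ NeumannBC Nx Ny Wp' ∧
          (∀ i ∈ Finset.Icc 1 Nx, ∀ j ∈ Finset.Icc 1 Ny,
            Ψp' i j - Ψn i j + β * Δt * ((Ψp' i j + Ψn i j) / 2) =
              M * Δt * lapH hx hy (fun a b => (Wp' a b + W0 a b) / 2) i j) ∧
          (∀ i ∈ Finset.Icc 1 Nx, ∀ j ∈ Finset.Icc 1 Ny,
            Δt * ((Ψp' i j + Ψn i j) / 2) = Zp' i j - Zn i j) ∧
          (∀ i ∈ Finset.Icc 1 Nx, ∀ j ∈ Finset.Icc 1 Ny,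
            (Wp' i j + W0 i j) / 2 =
              lap2H Nx Ny hx hy (fun a b => (Zp' a b + Zn a b) / 2) i j
              + 2 * lapH hx hy (fun a b => (3 * Zn a b - Zm a b) / 2) i j
              + α * ((Zp' i j + Zn i j) / 2)
              + (Rp' + Rn) / 2 /
                  Real.sqrt (E1h Nx Ny hx hy (fun a b => (3 * Zn a b - Zm a b) / 2)) *
                  ((3 * Zn i j - Zm i j) / 2) ^ 3) ∧
          (Rp' - Rn =
            1 / (2 * Real.sqrt (E1h Nx Ny hx hy (fun a b => (3 * Zn a b - Zm a b) / 2))) *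
              innerM Nx Ny hx hy (fun i j => ((3 * Zn i j - Zm i j) / 2) ^ 3)
                (fun i j => Zp' i j - Zn i j))) →
        ((∀ i ∈ Finset.Icc 1 Nx, ∀ j ∈ Finset.Icc 1 Ny,
            Zp' i j = Zp i j ∧ Wp' i j = Wp i j ∧ Ψp' i j = Ψp i j) ∧ Rp' = Rp)) := by
  obtain ⟨Zp, Wp, Ψp, Rp, h⟩ := exists_isSchemeStep
    (s := Real.sqrt (E1h Nx Ny hx hy fun i j => (3 * Zn i j - Zm i j) / 2))
    (g := fun i j => 2 * lapH hx hy (fun a b => (3 * Zn a b - Zm a b) / 2) i j)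
    (f := fun i j => ((3 * Zn i j - Zm i j) / 2) ^ 3) (Zn := Zn) (Ψn := Ψn) (Rn := Rn)
    hhx hhy hΔt hM hβ hα hW0
  exact ⟨Zp, Wp, Ψp, Rp, h, fun _ _ _ _ h' => IsSchemeStep.unique hhx hhy hΔt hM hβ hα h' h⟩

/-- Theorem 3.1, unique solvability part: given the data at time levels `n-1` and `n`,
the linear scheme (3.14)-(3.17) admits a solution
`(Z^{n+1}, W^{n+1}, R^{n+1}, Ψ^{n+1})`, which is unique (grid functions being
determined at interior cells, and `R^{n+1}` as a real number). -/
theorem fully_discrete_unique_solvability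
    (Nx Ny : ℕ) (hNx : 1 ≤ Nx) (hNy : 1 ≤ Ny)
    (hx hy : ℝ) (hhx : 0 < hx) (hhy : 0 < hy)
    (Δt M β α : ℝ) (hΔt : 0 < Δt) (hM : 0 < M) (hβ : 0 < β) (hα : 0 ≤ α)
    (Zm Zn W0 Ψn : ℕ → ℕ → ℝ) (Rn : ℝ)
    (hZn : NeumannBC Nx Ny Zn)
    (hΔZn : NeumannBC Nx Ny (extN Nx Ny (lapH hx hy Zn)))
    (hW0 : NeumannBC Nx Ny W0)
    (hE1 : 0 < E1h Nx Ny hx hy (fun i j => (3 * Zn i j - Zm i j) / 2)) :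
    ∃ (Zp Wp Ψp : ℕ → ℕ → ℝ) (Rp : ℝ),
      (NeumannBC Nx Ny Zp ∧ NeumannBC Nx Ny Wp ∧
        (∀ i ∈ Finset.Icc 1 Nx, ∀ j ∈ Finset.Icc 1 Ny,
          Ψp i j - Ψn i j + β * Δt * ((Ψp i j + Ψn i j) / 2) =
            M * Δt * lapH hx hy (fun a b => (Wp a b + W0 a b) / 2) i j) ∧
        (∀ i ∈ Finset.Icc 1 Nx, ∀ j ∈ Finset.Icc 1 Ny,
          Δt * ((Ψp i j + Ψn i j) / 2) = Zp i j - Zn i j) ∧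
        (∀ i ∈ Finset.Icc 1 Nx, ∀ j ∈ Finset.Icc 1 Ny,
          (Wp i j + W0 i j) / 2 =
            lap2H Nx Ny hx hy (fun a b => (Zp a b + Zn a b) / 2) i j
            + 2 * lapH hx hy (fun a b => (3 * Zn a b - Zm a b) / 2) i j
            + α * ((Zp i j + Zn i j) / 2)
            + (Rp + Rn) / 2 /
                Real.sqrt (E1h Nx Ny hx hy (fun a b => (3 * Zn a b - Zm a b) / 2)) *
                ((3 * Zn i j - Zm i j) / 2) ^ 3) ∧
        (Rp - Rn =
          1 / (2 * Real.sqrt (E1h Nx Ny hx hy (fun a b => (3 * Zn a b - Zm a b) / 2))) *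
            innerM Nx Ny hx hy (fun i j => ((3 * Zn i j - Zm i j) / 2) ^ 3)
              (fun i j => Zp i j - Zn i j))) ∧
      (∀ (Zp' Wp' Ψp' : ℕ → ℕ → ℝ) (Rp' : ℝ),
        (NeumannBC Nx Ny Zp' ∧ NeumannBC Nx Ny Wp' ∧
          (∀ i ∈ Finset.Icc 1 Nx, ∀ j ∈ Finset.Icc 1 Ny,
            Ψp' i j - Ψn i j + β * Δt * ((Ψp' i j + Ψn i j) / 2) =
              M * Δt * lapH hx hy (fun a b => (Wp' a b + W0 a b) / 2) i j) ∧
          (∀ i ∈ Finset.Icc 1 Nx, ∀ j ∈ Finset.Icc 1 Ny,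
            Δt * ((Ψp' i j + Ψn i j) / 2) = Zp' i j - Zn i j) ∧
          (∀ i ∈ Finset.Icc 1 Nx, ∀ j ∈ Finset.Icc 1 Ny,
            (Wp' i j + W0 i j) / 2 =
              lap2H Nx Ny hx hy (fun a b => (Zp' a b + Zn a b) / 2) i j
              + 2 * lapH hx hy (fun a b => (3 * Zn a b - Zm a b) / 2) i j
              + α * ((Zp' i j + Zn i j) / 2)
              + (Rp' + Rn) / 2 /
                  Real.sqrt (E1h Nx Ny hx hy (fun a b => (3 * Zn a b - Zm a b) / 2)) *
                  ((3 * Zn i j - Zm i j) / 2) ^ 3) ∧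
          (Rp' - Rn =
            1 / (2 * Real.sqrt (E1h Nx Ny hx hy (fun a b => (3 * Zn a b - Zm a b) / 2))) *
              innerM Nx Ny hx hy (fun i j => ((3 * Zn i j - Zm i j) / 2) ^ 3)
                (fun i j => Zp' i j - Zn i j))) →
        ((∀ i ∈ Finset.Icc 1 Nx, ∀ j ∈ Finset.Icc 1 Ny,
            Zp' i j = Zp i j ∧ Wp' i j = Wp i j ∧ Ψp' i j = Ψp i j) ∧ Rp' = Rp)) :=
  fully_discrete_unique_solvability_general Nx Ny hx hy hhx hhy Δt M β α hΔt hM hβ hα Zm Zn W0 Ψn Rn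
    hW0
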